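/- arXiv:2101.05660 — 4 statements merged into one kernel-verified Lean document; each statement's English description precedes it below -/
import Mathlib

section
/- Let φ : ℝⁿ → (0,∞) be a radial, radially decreasing measurable function with ∫_{ℝⁿ} φ dm = 1 satisfying the comparison condition sup{ φ_t(x)/φ(x) : t ∈ (0,1), ‖x‖ > 1 } < ∞. Let μ be a locally finite complex (or signed) Borel measure on ℝⁿ with (|μ| ∗ φ_{t₀})(0) < ∞ for some t₀ ∈ (0,∞), and let μ̃ be the restriction of μ to the closed ball {ξ : ‖ξ‖ ≤ t₀}. Then for every α > 0, lim (μ ∗ φ_t)(x) = lim (μ̃ ∗ φ_t)(x) as (x,t) → (0,0) within S(0,α) = {(x,t) : ‖x‖ < αt}, in the sense that whenever one of these nontangential limits exists, so does the other and they are equal. -/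
open MeasureTheory Metric Filter
open scoped ENNReal Topology NNReal

noncomputable section

abbrev Eu (n : ℕ) := EuclideanSpace ℝ (Fin n)

/-- The dilated kernel `φ_t(x) = t^{-n} φ(x/t)`. -/
def dil (n : ℕ) (φ : Eu n → ℝ) (t : ℝ) (x : Eu n) : ℝ := (t ^ n)⁻¹ * φ (t⁻¹ • x)

/-- radial and radially decreasing -/
def RadialDecr {n : ℕ} (φ : Eu n → ℝ) : Prop := ∀ x y : Eu n, ‖x‖ ≤ ‖y‖ → φ y ≤ φ x

/-- comparison condition -/
def CompCond (n : ℕ) (φ : Eu n → ℝ) : Prop :=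
  ∃ C : ℝ, ∀ t ∈ Set.Ioo (0:ℝ) 1, ∀ x : Eu n, 1 < ‖x‖ → dil n φ t x ≤ C * φ x

/-- convolution integral (μ ∗ φ_t)(x) for dμ = f dν -/
def convInt (n : ℕ) (ν : Measure (Eu n)) (f : Eu n → ℂ) (φ : Eu n → ℝ) (x : Eu n) (t : ℝ) : ℂ :=
  ∫ ξ, (dil n φ t (x - ξ) : ℂ) * f ξ ∂ν

/-!
The two convolutions differ by `∫_{‖ξ‖ > t₀} φ_t(x - ξ) dμ(ξ)`, and this tends to `0` as
`(x, t) → (0, 0)` with `t > 0`, by dominated convergence. For `‖x‖, t < t₀/2` and `‖ξ‖ > t₀`, the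
comparison condition at scale `t₀/2` followed by radial monotonicity gives
`φ_t(x - ξ) ≤ C φ_{t₀/2}(x - ξ) ≤ 2ⁿ C φ_{t₀}(-ξ)`, which is `|μ|`-integrable by hypothesis.
Pointwise, `φ_t(x - ξ) ≤ 2ⁿ φ_{2t}(ξ) → 0`: an integrable radially decreasing `φ` has
`‖w‖ⁿ φ(w) ≲ ∫_{‖v‖ > ‖w‖/2} φ → 0`, by comparing `φ(w)` with `φ` on the annulus
`‖w‖/2 < ‖v‖ < ‖w‖`.
-/

open scoped Pointwise

lemma tendsto_setIntegral_compl_closedBall {X E : Type*} [PseudoMetricSpace X] [MeasurableSpace X]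
    [OpensMeasurableSpace X] [NormedAddCommGroup E] [NormedSpace ℝ E] {μ : Measure X}
    {g : X → E} (hg : Integrable g μ) (x₀ : X) :
    Tendsto (fun R => ∫ x in (closedBall x₀ R)ᶜ, g x ∂μ) atTop (𝓝 0) := by
  have hanti : Antitone fun R : ℝ => (closedBall x₀ R)ᶜ :=
    fun _ _ h => Set.compl_subset_compl.2 (closedBall_subset_closedBall h)
  have hempty : ⋂ R : ℝ, (closedBall x₀ R)ᶜ = ∅ := Set.eq_empty_iff_forall_notMem.2
    fun x hx => Set.mem_iInter.1 hx (dist x x₀) (mem_closedBall.2 le_rfl)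
  simpa [hempty] using tendsto_setIntegral_of_antitone (fun _ => measurableSet_closedBall.compl)
    hanti ⟨0, hg.integrableOn⟩

lemma norm_integral_sub_setIntegral_le {α E : Type*} [MeasurableSpace α] [NormedAddCommGroup E]
    [NormedSpace ℝ E] {μ : Measure α} {g : α → E} {s : Set α} (hs : MeasurableSet s)
    (hg : IntegrableOn g sᶜ μ) :
    ‖∫ a, g a ∂μ - ∫ a in s, g a ∂μ‖ ≤ ∫ a in sᶜ, ‖g a‖ ∂μ := by
  by_cases hgs : IntegrableOn g s μ
  · have hgi : Integrable g μ := by simpa using hgs.union hg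
    rw [← integral_add_compl hs hgi, add_sub_cancel_left]
    exact norm_integral_le_integral_norm _
  · rw [integral_undef fun h => hgs h.integrableOn, integral_undef hgs, sub_zero, norm_zero]
    exact integral_nonneg fun _ => norm_nonneg _

lemma eventually_norm_fst_lt_and_snd_mem_Ioo {E : Type*} [SeminormedAddCommGroup E] {ε : ℝ}
    (hε : 0 < ε) :
    ∀ᶠ p in 𝓝[{p : E × ℝ | 0 < p.2}] ((0 : E), (0 : ℝ)), ‖p.1‖ < ε ∧ p.2 ∈ Set.Ioo 0 ε := by
  filter_upwards [self_mem_nhdsWithin, nhdsWithin_le_nhds (ball_mem_nhds _ hε)] with p hp hball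
  rw [mem_ball, Prod.dist_eq, max_lt_iff, dist_zero_right, Real.dist_0_eq_abs] at hball
  exact ⟨hball.1, hp, (le_abs_self _).trans_lt hball.2⟩

section Dilation

variable {n : ℕ} {φ : Eu n → ℝ}

lemma dil_nonneg (h0 : ∀ x, 0 ≤ φ x) {t : ℝ} (ht : 0 ≤ t) (x : Eu n) : 0 ≤ dil n φ t x :=
  mul_nonneg (by positivity) (h0 _)

lemma measurable_dil (hφ : Measurable φ) (t : ℝ) : Measurable (dil n φ t) :=
  measurable_const.mul (hφ.comp (measurable_const_smul _))

lemma measurable_dil_sub (hφ : Measurable φ) (t : ℝ) (x : Eu n) :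
    Measurable fun ξ => dil n φ t (x - ξ) :=
  (measurable_dil hφ t).comp (measurable_id.const_sub x)

lemma dil_mul_smul {r : ℝ} (hr : r ≠ 0) (s : ℝ) (y : Eu n) :
    dil n φ (r * s) (r • y) = (r ^ n)⁻¹ * dil n φ s y := by
  have hrs : (r * s)⁻¹ * r = s⁻¹ := by rw [mul_inv, mul_right_comm, inv_mul_cancel₀ hr, one_mul]
  rw [dil, dil, smul_smul, hrs, mul_pow, mul_inv, mul_assoc]

lemma RadialDecr.dil_le_pow_mul_dil (hφ : RadialDecr φ) {c t : ℝ} (hc : 0 < c) (ht : 0 < t)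
    {u v : Eu n} (h : ‖u‖ ≤ c * ‖v‖) : dil n φ t v ≤ c ^ n * dil n φ (c * t) u := by
  have hnorm : ‖(c * t)⁻¹ • u‖ ≤ ‖t⁻¹ • v‖ := by
    rw [norm_smul, norm_smul, norm_inv, norm_inv, Real.norm_of_nonneg (by positivity),
      Real.norm_of_nonneg ht.le, mul_inv, mul_comm c⁻¹, mul_assoc]
    gcongr
    rwa [inv_mul_le_iff₀ hc]
  calc dil n φ t v ≤ (t ^ n)⁻¹ * φ ((c * t)⁻¹ • u) := by
        unfold dil; gcongr; exact hφ _ _ hnorm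
    _ = c ^ n * dil n φ (c * t) u := by
        unfold dil
        field_simp
        ring

lemma CompCond.exists_dil_le (hcomp : CompCond n φ) (h0 : ∀ x, 0 ≤ φ x) :
    ∃ C, 0 ≤ C ∧ ∀ r, 0 < r → ∀ t ∈ Set.Ioo 0 r, ∀ w : Eu n, r < ‖w‖ →
      dil n φ t w ≤ C * dil n φ r w := by
  obtain ⟨C, hC⟩ := hcomp
  refine ⟨max C 0, le_max_right _ _, fun r hr t ⟨ht, htr⟩ w hw => ?_⟩
  have hs : t / r ∈ Set.Ioo (0 : ℝ) 1 := ⟨div_pos ht hr, (div_lt_one hr).2 htr⟩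
  have hy : 1 < ‖r⁻¹ • w‖ := by
    rwa [norm_smul, norm_inv, Real.norm_of_nonneg hr.le, ← div_eq_inv_mul, one_lt_div hr]
  calc dil n φ t w = (r ^ n)⁻¹ * dil n φ (t / r) (r⁻¹ • w) := by
        rw [← dil_mul_smul hr.ne', mul_div_cancel₀ _ hr.ne', smul_inv_smul₀ hr.ne']
    _ ≤ (r ^ n)⁻¹ * (max C 0 * φ (r⁻¹ • w)) := by
        gcongr
        exact (hC _ hs _ hy).trans (mul_le_mul_of_nonneg_right (le_max_left _ _) (h0 _))
    _ = max C 0 * dil n φ r w := by unfold dil; ring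

lemma RadialDecr.mul_le_setIntegral_compl_closedBall (hφ : RadialDecr φ) (h0 : ∀ x, 0 ≤ φ x)
    (hint : Integrable φ) {w : Eu n} (hw : w ≠ 0) :
    φ w * (‖w‖ ^ n * volume.real (ball (0 : Eu n) 1 \ closedBall 0 (1 / 2))) ≤
      ∫ v in (closedBall 0 (‖w‖ / 2))ᶜ, φ v := by
  set A := ball (0 : Eu n) 1 \ closedBall 0 (1 / 2)
  have hA : MeasurableSet (‖w‖ • A) :=
    (measurableSet_ball.diff measurableSet_closedBall).const_smul₀ _
  have hnorm : ∀ v ∈ ‖w‖ • A, ‖w‖ / 2 < ‖v‖ ∧ ‖v‖ ≤ ‖w‖ := by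
    rintro _ ⟨a, ⟨ha1, ha2⟩, rfl⟩
    rw [mem_ball_zero_iff] at ha1
    rw [mem_closedBall_zero_iff, not_le] at ha2
    rw [norm_smul, norm_norm]
    have := norm_pos_iff.2 hw
    constructor <;> nlinarith
  calc φ w * (‖w‖ ^ n * volume.real A) = φ w * volume.real (‖w‖ • A) := by
        rw [measureReal_def, measureReal_def, Measure.addHaar_smul_of_nonneg _ (norm_nonneg w),
          finrank_euclideanSpace_fin, ENNReal.toReal_mul, ENNReal.toReal_ofReal (by positivity)]
    _ ≤ ∫ v in ‖w‖ • A, φ v :=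
        setIntegral_ge_of_const_le_real hA
          ((measure_mono fun v hv => mem_closedBall_zero_iff.2 (hnorm v hv).2).trans_lt
            measure_closedBall_lt_top).ne (fun v hv => hφ _ _ (hnorm v hv).2)
          hint.integrableOn
    _ ≤ ∫ v in (closedBall 0 (‖w‖ / 2))ᶜ, φ v :=
        setIntegral_mono_set hint.integrableOn (Eventually.of_forall h0)
          (LE.le.eventuallyLE fun v hv => mem_closedBall_zero_iff.not.2 (hnorm v hv).1.not_ge)

lemma RadialDecr.tendsto_dil_nhdsGT_zero (hφ : RadialDecr φ) (h0 : ∀ x, 0 ≤ φ x)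
    (hint : Integrable φ) {u : Eu n} (hu : u ≠ 0) :
    Tendsto (fun t => dil n φ t u) (𝓝[>] 0) (𝓝 0) := by
  set a := volume.real (ball (0 : Eu n) 1 \ closedBall 0 (1 / 2))
  have hu' : 0 < ‖u‖ := norm_pos_iff.2 hu
  have ha : 0 < a := by
    have hne : (ball (0 : Eu n) 1 \ closedBall 0 (1 / 2)).Nonempty := by
      refine ⟨(3 / 4 * ‖u‖⁻¹) • u, ?_⟩
      rw [Set.mem_sdiff, mem_ball_zero_iff, mem_closedBall_zero_iff, norm_smul,
        Real.norm_of_nonneg (by positivity), mul_assoc, inv_mul_cancel₀ hu'.ne']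
      norm_num
    exact ENNReal.toReal_pos ((isOpen_ball.sdiff isClosed_closedBall).measure_pos _ hne).ne'
      ((measure_mono Set.sdiff_subset).trans_lt measure_ball_lt_top).ne
  have hbound : ∀ t > 0,
      dil n φ t u ≤ (∫ v in (closedBall 0 (‖t⁻¹ • u‖ / 2))ᶜ, φ v) / (‖u‖ ^ n * a) := by
    intro t ht
    rw [le_div_iff₀ (by positivity)]
    calc dil n φ t u * (‖u‖ ^ n * a) = φ (t⁻¹ • u) * (‖t⁻¹ • u‖ ^ n * a) := by
          rw [norm_smul, norm_inv, Real.norm_of_nonneg ht.le, mul_pow, inv_pow, dil]; ring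
      _ ≤ _ := hφ.mul_le_setIntegral_compl_closedBall h0 hint
          (smul_ne_zero (inv_ne_zero ht.ne') hu)
  have hR : Tendsto (fun t : ℝ => ‖t⁻¹ • u‖ / 2) (𝓝[>] 0) atTop := by
    simp only [norm_smul, mul_div_assoc]
    exact (tendsto_norm_inv_nhdsNE_zero_atTop.mono_left
      (nhdsWithin_mono _ fun _ ht => ne_of_gt ht)).atTop_mul_const (by positivity)
  refine squeeze_zero' ?_ ?_ (by simpa using
    ((tendsto_setIntegral_compl_closedBall hint 0).comp hR).div_const (‖u‖ ^ n * a))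
  · filter_upwards [self_mem_nhdsWithin] with t ht using dil_nonneg h0 (le_of_lt ht) u
  · filter_upwards [self_mem_nhdsWithin] with t ht using hbound t ht

lemma RadialDecr.tendsto_dil_sub (hφ : RadialDecr φ) (h0 : ∀ x, 0 ≤ φ x) (hint : Integrable φ)
    {ξ : Eu n} (hξ : ξ ≠ 0) :
    Tendsto (fun p : Eu n × ℝ => dil n φ p.2 (p.1 - ξ)) (𝓝[{p | 0 < p.2}] (0, 0)) (𝓝 0) := by
  have h2t : Tendsto (fun p : Eu n × ℝ => 2 * p.2) (𝓝[{p | 0 < p.2}] (0, 0)) (𝓝[>] 0) := by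
    refine tendsto_nhdsWithin_iff.2 ⟨?_, ?_⟩
    · simpa using
        ((continuous_snd.tendsto ((0 : Eu n), (0 : ℝ))).mono_left nhdsWithin_le_nhds).const_mul 2
    · filter_upwards [self_mem_nhdsWithin] with p hp using mul_pos two_pos hp
  refine squeeze_zero' ?_ ?_ (by
    simpa using ((hφ.tendsto_dil_nhdsGT_zero h0 hint hξ).comp h2t).const_mul (2 ^ n))
  · filter_upwards [self_mem_nhdsWithin] with p hp using dil_nonneg h0 (le_of_lt hp) _
  · filter_upwards [eventually_norm_fst_lt_and_snd_mem_Ioo (half_pos (norm_pos_iff.2 hξ))]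
      with p ⟨hx, ht⟩
    have := (norm_sub_norm_le ξ p.1).trans_eq (norm_sub_rev ξ p.1)
    exact hφ.dil_le_pow_mul_dil two_pos ht.1 (by linarith)

lemma CompCond.exists_eventually_dil_sub_le (hcomp : CompCond n φ) (hφ : RadialDecr φ)
    (h0 : ∀ x, 0 ≤ φ x) {t₀ : ℝ} (ht₀ : 0 < t₀) :
    ∃ C, ∀ᶠ p in 𝓝[{p : Eu n × ℝ | 0 < p.2}] (0, 0), ∀ ξ : Eu n, t₀ < ‖ξ‖ →
      dil n φ p.2 (p.1 - ξ) ≤ C * dil n φ t₀ (-ξ) := by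
  obtain ⟨C, hC0, hC⟩ := hcomp.exists_dil_le h0
  refine ⟨C * 2 ^ n, ?_⟩
  filter_upwards [eventually_norm_fst_lt_and_snd_mem_Ioo (half_pos ht₀)] with p ⟨hx, ht⟩ ξ hξ
  have := (norm_sub_norm_le ξ p.1).trans_eq (norm_sub_rev ξ p.1)
  calc dil n φ p.2 (p.1 - ξ) ≤ C * dil n φ (t₀ / 2) (p.1 - ξ) :=
        hC _ (half_pos ht₀) _ ht _ (by linarith)
    _ ≤ C * (2 ^ n * dil n φ (2 * (t₀ / 2)) (-ξ)) := by
        gcongr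
        exact hφ.dil_le_pow_mul_dil two_pos (half_pos ht₀) (by rw [norm_neg]; linarith)
    _ = C * 2 ^ n * dil n φ t₀ (-ξ) := by rw [mul_div_cancel₀ _ two_ne_zero, mul_assoc]

lemma CompCond.exists_integrable_dominating (hcomp : CompCond n φ) (hφm : Measurable φ)
    (hφ : RadialDecr φ) (h0 : ∀ x, 0 ≤ φ x) {ν : Measure (Eu n)} {t₀ : ℝ} (ht₀ : 0 < t₀)
    (hfin : ∫⁻ ξ, ENNReal.ofReal (dil n φ t₀ (-ξ)) ∂ν < ⊤) :
    ∃ g : Eu n → ℝ, Integrable g (ν.restrict (closedBall 0 t₀)ᶜ) ∧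
      ∀ᶠ p in 𝓝[{p : Eu n × ℝ | 0 < p.2}] (0, 0),
        ∀ᵐ ξ ∂ν.restrict (closedBall 0 t₀)ᶜ, ‖dil n φ p.2 (p.1 - ξ)‖ ≤ g ξ := by
  obtain ⟨C, hC⟩ := hcomp.exists_eventually_dil_sub_le hφ h0 ht₀
  have hint : Integrable (fun ξ => dil n φ t₀ (-ξ)) ν :=
    ⟨((measurable_dil hφm t₀).comp measurable_neg).aestronglyMeasurable,
      (hasFiniteIntegral_iff_ofReal (Eventually.of_forall fun _ => dil_nonneg h0 ht₀.le _)).2 hfin⟩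
  refine ⟨fun ξ => C * dil n φ t₀ (-ξ), (hint.const_mul C).restrict, ?_⟩
  filter_upwards [hC, self_mem_nhdsWithin] with p hp ht
  refine ae_restrict_of_forall_mem measurableSet_closedBall.compl fun ξ hξ => ?_
  rw [Real.norm_of_nonneg (dil_nonneg h0 (le_of_lt ht) _)]
  exact hp ξ (by simpa using hξ)

lemma RadialDecr.tendsto_integral_dil_sub_compl_closedBall (hφ : RadialDecr φ) (hφm : Measurable φ)
    (h0 : ∀ x, 0 ≤ φ x) (hint : Integrable φ) {ν : Measure (Eu n)} {t₀ : ℝ} (ht₀ : 0 ≤ t₀)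
    {g : Eu n → ℝ} (hg : Integrable g (ν.restrict (closedBall 0 t₀)ᶜ))
    (hdom : ∀ᶠ p in 𝓝[{p : Eu n × ℝ | 0 < p.2}] (0, 0),
        ∀ᵐ ξ ∂ν.restrict (closedBall 0 t₀)ᶜ, ‖dil n φ p.2 (p.1 - ξ)‖ ≤ g ξ) :
    Tendsto (fun p : Eu n × ℝ => ∫ ξ in (closedBall 0 t₀)ᶜ, dil n φ p.2 (p.1 - ξ) ∂ν)
      (𝓝[{p | 0 < p.2}] (0, 0)) (𝓝 0) := by
  have hlim : ∀ᵐ ξ ∂ν.restrict (closedBall 0 t₀)ᶜ, Tendsto (fun p : Eu n × ℝ =>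
      dil n φ p.2 (p.1 - ξ)) (𝓝[{p | 0 < p.2}] (0, 0)) (𝓝 0) := by
    refine ae_restrict_of_forall_mem measurableSet_closedBall.compl fun ξ hξ => ?_
    exact hφ.tendsto_dil_sub h0 hint (by rintro rfl; exact hξ (mem_closedBall_self ht₀))
  have hm : ∀ p : Eu n × ℝ, AEStronglyMeasurable (fun ξ => dil n φ p.2 (p.1 - ξ))
      (ν.restrict (closedBall 0 t₀)ᶜ) := fun p =>
    (measurable_dil_sub hφm p.2 p.1).aestronglyMeasurable
  have := tendsto_integral_filter_of_dominated_convergence (f := fun _ => (0 : ℝ)) g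
    (Eventually.of_forall hm) hdom hg hlim
  rwa [integral_zero] at this

lemma norm_convInt_sub_convInt_restrict_le {ν : Measure (Eu n)} {f : Eu n → ℂ}
    (hf : Measurable f) (hf1 : ∀ ξ, ‖f ξ‖ ≤ 1) (hφm : Measurable φ) (h0 : ∀ x, 0 ≤ φ x)
    {s : Set (Eu n)} (hs : MeasurableSet s) {x : Eu n} {t : ℝ} (ht : 0 ≤ t)
    (hint : IntegrableOn (fun ξ => dil n φ t (x - ξ)) sᶜ ν) :
    ‖convInt n ν f φ x t - convInt n (ν.restrict s) f φ x t‖ ≤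
      ∫ ξ in sᶜ, dil n φ t (x - ξ) ∂ν := by
  have hle : ∀ ξ, ‖(dil n φ t (x - ξ) : ℂ) * f ξ‖ ≤ dil n φ t (x - ξ) := fun ξ => by
    rw [norm_mul, Complex.norm_real, Real.norm_of_nonneg (dil_nonneg h0 ht _)]
    exact mul_le_of_le_one_right (dil_nonneg h0 ht _) (hf1 ξ)
  have hm : Measurable fun ξ => (dil n φ t (x - ξ) : ℂ) * f ξ :=
    (Complex.measurable_ofReal.comp (measurable_dil_sub hφm t x)).mul hf
  have hgi : IntegrableOn (fun ξ => (dil n φ t (x - ξ) : ℂ) * f ξ) sᶜ ν :=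
    hint.mono' hm.aestronglyMeasurable (Eventually.of_forall hle)
  exact (norm_integral_sub_setIntegral_le hs hgi).trans (integral_mono hgi.norm hint hle)

end Dilation

theorem stmt7_general {n : ℕ} (φ : Eu n → ℝ)
    (hφpos : ∀ x, 0 < φ x) (hφmeas : Measurable φ)
    (hφrad : RadialDecr φ) (hφint : ∫ x, φ x = 1)
    (hcomp : CompCond n φ)
    (ν : Measure (Eu n))
    (f : Eu n → ℂ) (hf : Measurable f) (hf1 : ∀ ξ, ‖f ξ‖ = 1)
    (t₀ : ℝ) (ht₀ : 0 < t₀)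
    (hfin : ∫⁻ ξ, ENNReal.ofReal (dil n φ t₀ (-ξ)) ∂ν < ⊤)
    (α : ℝ) (L : ℂ) :
    Tendsto (fun p : Eu n × ℝ => convInt n ν f φ p.1 p.2)
        (𝓝[{p : Eu n × ℝ | 0 < p.2 ∧ dist p.1 0 < α * p.2}] ((0 : Eu n), 0)) (𝓝 L) ↔
      Tendsto (fun p : Eu n × ℝ =>
          convInt n (ν.restrict (closedBall (0 : Eu n) t₀)) f φ p.1 p.2)
        (𝓝[{p : Eu n × ℝ | 0 < p.2 ∧ dist p.1 0 < α * p.2}] ((0 : Eu n), 0)) (𝓝 L) := by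
  have hint : Integrable φ := Integrable.of_integral_ne_zero (by rw [hφint]; exact one_ne_zero)
  have h0 : ∀ x, 0 ≤ φ x := fun x => (hφpos x).le
  obtain ⟨g, hg, hdom⟩ := hcomp.exists_integrable_dominating hφmeas hφrad h0 ht₀ hfin
  have hdiff : Tendsto (fun p : Eu n × ℝ => convInt n ν f φ p.1 p.2 -
      convInt n (ν.restrict (closedBall 0 t₀)) f φ p.1 p.2) (𝓝[{p | 0 < p.2}] (0, 0)) (𝓝 0) := by
    refine squeeze_zero_norm' ?_
      (hφrad.tendsto_integral_dil_sub_compl_closedBall hφmeas h0 hint ht₀.le hg hdom)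
    filter_upwards [hdom, self_mem_nhdsWithin] with p hp ht
    exact norm_convInt_sub_convInt_restrict_le hf (fun ξ => (hf1 ξ).le) hφmeas h0
      measurableSet_closedBall (le_of_lt ht)
      (hg.mono' (measurable_dil_sub hφmeas p.2 p.1).aestronglyMeasurable hp)
  have hcone := hdiff.mono_left <| nhdsWithin_mono _
    (s := {p : Eu n × ℝ | 0 < p.2 ∧ dist p.1 0 < α * p.2}) fun _ => And.left
  exact ⟨fun h => by simpa using h.sub hcone, fun h => by simpa using h.add hcone⟩

theorem stmt7 {n : ℕ} (hn : 0 < n) (φ : Eu n → ℝ)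
    (hφpos : ∀ x, 0 < φ x) (hφmeas : Measurable φ)
    (hφrad : RadialDecr φ) (hφint : ∫ x, φ x = 1)
    (hcomp : CompCond n φ)
    (ν : Measure (Eu n)) [IsLocallyFiniteMeasure ν]
    (f : Eu n → ℂ) (hf : Measurable f) (hf1 : ∀ ξ, ‖f ξ‖ = 1)
    (t₀ : ℝ) (ht₀ : 0 < t₀)
    (hfin : ∫⁻ ξ, ENNReal.ofReal (dil n φ t₀ (-ξ)) ∂ν < ⊤)
    (α : ℝ) (hα : 0 < α) (L : ℂ) :
    Tendsto (fun p : Eu n × ℝ => convInt n ν f φ p.1 p.2)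
        (𝓝[{p : Eu n × ℝ | 0 < p.2 ∧ dist p.1 0 < α * p.2}] ((0 : Eu n), 0)) (𝓝 L) ↔
      Tendsto (fun p : Eu n × ℝ =>
          convInt n (ν.restrict (closedBall (0 : Eu n) t₀)) f φ p.1 p.2)
        (𝓝[{p : Eu n × ℝ | 0 < p.2 ∧ dist p.1 0 < α * p.2}] ((0 : Eu n), 0)) (𝓝 L) :=
  stmt7_general φ hφpos hφmeas hφrad hφint hcomp ν f hf hf1 t₀ ht₀ hfin α L
end
end

section
/- Let μ be a locally finite complex (or signed) Borel measure on ℝⁿ. If x₀ ∈ ℝⁿ is a σ-point of μ with D_σμ(x₀) = L ∈ ℂ, then the strong derivative of μ at x₀ exists and equals L; that is, for every open ball B ⊂ ℝⁿ, lim_{r→0} μ(x₀ + rB)/m(rB) = L. -/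
open MeasureTheory Metric Filter
open scoped ENNReal Topology NNReal

noncomputable section

/-- σ-point of the measure dμ = f dν, with D_σ μ(x₀) = L -/
def IsSigmaPt (n : ℕ) (ν : Measure (Eu n)) (f : Eu n → ℂ) (x₀ : Eu n) (L : ℂ) : Prop :=
  ∀ ε > 0, ∃ δ > 0, ∀ (x : Eu n) (r : ℝ), 0 < r → dist x x₀ < δ → r < δ →
    ‖(∫ ξ in ball x r, f ξ ∂ν) - L * ((volume (ball x r)).toReal : ℂ)‖
      < ε * (dist x x₀ + r) ^ n

/-- μ has strong derivative L at x₀: for every open ball B = B(y,s),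
`μ(x₀ + rB)/m(rB) → L` as `r → 0⁺`; here `x₀ + r·B(y,s) = B(x₀ + ry, rs)`. -/
def HasStrongDeriv (n : ℕ) (ν : Measure (Eu n)) (f : Eu n → ℂ) (x₀ : Eu n) (L : ℂ) : Prop :=
  ∀ (y : Eu n) (s : ℝ), 0 < s →
    Tendsto (fun r : ℝ =>
        (∫ ξ in ball (x₀ + r • y) (r * s), f ξ ∂ν) /
          ((volume (ball (x₀ + r • y) (r * s))).toReal : ℂ))
      (𝓝[>] 0) (𝓝 L)

/-!
The balls `x₀ + r·B(y,s) = B(x₀ + r y, r s)` are non-tangential: their distance to `x₀` is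
`‖y‖/s` times their radius `ρ = r s`. For such a ball `(dist + ρ)^n` is a fixed multiple of
`ρ^n`, i.e. of its volume, so the σ-point estimate `|μ(B) - L m(B)| < ε (dist + ρ)^n` becomes
`|μ(B)/m(B) - L| < C ε` with `C` depending only on `‖y‖/s` and `n`.
-/

lemma EuclideanSpace.volume_ball_toReal {n : ℕ} (x : Eu n) {r : ℝ} (hr : 0 < r) :
    (volume (ball x r)).toReal = r ^ n * (volume (ball (0 : Eu n) 1)).toReal := by
  rw [Measure.addHaar_ball_of_pos _ _ hr, ENNReal.toReal_mul,
    ENNReal.toReal_ofReal (by positivity), finrank_euclideanSpace_fin]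

lemma EuclideanSpace.volume_ball_toReal_pos {n : ℕ} (x : Eu n) {r : ℝ} (hr : 0 < r) :
    0 < (volume (ball x r)).toReal :=
  ENNReal.toReal_pos (measure_ball_pos _ _ hr).ne' measure_ball_lt_top.ne

lemma Complex.norm_div_ofReal_sub_lt {I L : ℂ} {V ε : ℝ} (hV : 0 < V)
    (h : ‖I - L * V‖ < ε * V) : ‖I / V - L‖ < ε := by
  have hV' : (V : ℂ) ≠ 0 := Complex.ofReal_ne_zero.mpr hV.ne'
  rwa [← mul_div_cancel_right₀ L hV', ← sub_div, norm_div, Complex.norm_real,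
    Real.norm_of_nonneg hV.le, div_lt_iff₀ hV]

lemma IsSigmaPt.norm_average_sub_lt_of_dist_le {n : ℕ} {ν : Measure (Eu n)} {f : Eu n → ℂ}
    {x₀ : Eu n} {L : ℂ} (hσ : IsSigmaPt n ν f x₀ L) {K : ℝ} (hK : 0 ≤ K) {ε : ℝ} (hε : 0 < ε) :
    ∃ δ > 0, ∀ (x : Eu n) (ρ : ℝ), 0 < ρ → dist x x₀ ≤ K * ρ → ρ < δ →
      ‖(∫ ξ in ball x ρ, f ξ ∂ν) / ((volume (ball x ρ)).toReal : ℂ) - L‖ < ε := by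
  have hc := EuclideanSpace.volume_ball_toReal_pos (0 : Eu n) one_pos
  obtain ⟨δ, hδ, hσδ⟩ := hσ (ε * (volume (ball (0 : Eu n) 1)).toReal / (K + 1) ^ n)
    (by positivity)
  refine ⟨δ / (K + 1), by positivity, fun x ρ hρ hdist hρδ => ?_⟩
  rw [lt_div_iff₀ (by positivity)] at hρδ
  refine Complex.norm_div_ofReal_sub_lt (EuclideanSpace.volume_ball_toReal_pos x hρ) ?_
  calc _ < _ := hσδ x ρ hρ (by nlinarith) (by nlinarith)
    _ ≤ ε * (volume (ball (0 : Eu n) 1)).toReal / (K + 1) ^ n * ((K + 1) * ρ) ^ n := by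
        gcongr; linarith
    _ = ε * (volume (ball x ρ)).toReal := by
        rw [EuclideanSpace.volume_ball_toReal x hρ, mul_pow]
        field_simp

theorem stmt11_general {n : ℕ}
    (ν : Measure (Eu n))
    (f : Eu n → ℂ)
    (x₀ : Eu n) (L : ℂ) (hσ : IsSigmaPt n ν f x₀ L) :
    HasStrongDeriv n ν f x₀ L := by
  intro y s hs
  rw [Metric.tendsto_nhdsWithin_nhds]
  intro ε hε
  obtain ⟨δ, hδ, hball⟩ :=
    hσ.norm_average_sub_lt_of_dist_le (div_nonneg (norm_nonneg y) hs.le) hε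
  refine ⟨δ / s, by positivity, fun r (hr : 0 < r) hrδ => ?_⟩
  rw [Real.dist_eq, sub_zero, abs_of_pos hr, lt_div_iff₀ hs] at hrδ
  have hdist : dist (x₀ + r • y) x₀ = ‖y‖ / s * (r * s) := by
    rw [dist_eq_norm, add_sub_cancel_left, norm_smul, Real.norm_of_nonneg hr.le]
    field_simp
  rw [dist_eq_norm]
  exact hball _ _ (mul_pos hr hs) hdist.le hrδ

/-- A σ-point of μ is a point where the strong derivative exists, with the same value. -/
theorem stmt11 {n : ℕ} (hn : 0 < n)
    (ν : Measure (Eu n)) [IsLocallyFiniteMeasure ν]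
    (f : Eu n → ℂ) (hf : Measurable f) (hf1 : ∀ ξ, ‖f ξ‖ = 1)
    (x₀ : Eu n) (L : ℂ) (hσ : IsSigmaPt n ν f x₀ L) :
    HasStrongDeriv n ν f x₀ L :=
  stmt11_general ν f x₀ L hσ

end
end

section
/- Let μ be a locally finite signed Borel measure on ℝ and let f : ℝ → ℝ be a function (of locally bounded variation) such that μ((a,b]) = f(b) − f(a) for all real a < b. Then for x₀ ∈ ℝ and L ∈ ℝ: f is differentiable at x₀ with f′(x₀) = L if and only if x₀ is a σ-point of μ with D_σμ(x₀) = L. -/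
open MeasureTheory Metric Filter
open scoped ENNReal Topology NNReal

noncomputable section

/-- σ-point of the locally finite signed measure dμ = g dν on ℝ, with D_σ μ(x₀) = L. -/
def IsSigmaPtR (ν : Measure ℝ) (g : ℝ → ℝ) (x₀ : ℝ) (L : ℝ) : Prop :=
  ∀ ε > 0, ∃ δ > 0, ∀ (x r : ℝ), 0 < r → |x - x₀| < δ → r < δ →
    |(∫ ξ in ball x r, g ξ ∂ν) - L * (volume (ball x r)).toReal| < ε * (|x - x₀| + r)

/-!
Both sides say that an interval function `F` satisfies
`F(a, b) = L (b - a) + o(max(|a - x₀|, |b - x₀|))` as `a < b` tend to `x₀`: differentiability for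
`F(a, b) = f b - f a = μ((a, b])`, and the σ-point condition for `F(a, b) = μ((a, b))`, because
`|x - x₀| + r = max(|x - r - x₀|, |x + r - x₀|)`. The two interval functions are one-sided limits
of each other, `μ((a, b)) = lim_{t → b⁻} μ((a, t])` and `μ((a, b]) = lim_{t → b⁺} μ((a, t))`, and
an estimate of this form with a fixed `ε` survives one-sided limits in `b`.
-/

open Set

section IntervalLimits

variable {E : Type*} [NormedAddCommGroup E] [NormedSpace ℝ E] {ν : Measure ℝ} {g : ℝ → E}
  {a b c : ℝ}

theorem tendsto_setIntegral_Ioc_nhdsLT (hg : IntegrableOn g (Ioo a b) ν) :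
    Tendsto (fun t => ∫ ξ in Ioc a t, g ξ ∂ν) (𝓝[<] b) (𝓝 (∫ ξ in Ioo a b, g ξ ∂ν)) := by
  have hU : (⋃ t : Iio b, Ioc a (t : ℝ)) = Ioo a b := by
    ext ξ
    simp only [mem_iUnion, mem_Ioc, mem_Ioo, Subtype.exists, mem_Iio]
    constructor
    · rintro ⟨t, htb, hat, hξt⟩
      exact ⟨hat, hξt.trans_lt htb⟩
    · rintro ⟨haξ, hξb⟩
      exact ⟨ξ, hξb, haξ, le_rfl⟩
  rw [← tendsto_comp_coe_Iio_atTop, ← hU]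
  exact tendsto_setIntegral_of_monotone (fun _ => measurableSet_Ioc)
    (fun _ _ hst => Ioc_subset_Ioc_right hst) (hU ▸ hg)

theorem tendsto_setIntegral_Ioo_nhdsGT (hbc : b < c) (hg : IntegrableOn g (Ioo a c) ν) :
    Tendsto (fun t => ∫ ξ in Ioo a t, g ξ ∂ν) (𝓝[>] b) (𝓝 (∫ ξ in Ioc a b, g ξ ∂ν)) := by
  have hI : (⋂ t : (Ioi b)ᵒᵈ, Ioo a ((OrderDual.ofDual t : Ioi b) : ℝ)) = Ioc a b := by
    ext ξ
    simp only [mem_iInter, mem_Ioc, mem_Ioo]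
    constructor
    · intro h
      refine ⟨(h (OrderDual.toDual ⟨c, hbc⟩)).1, le_of_forall_gt fun t ht => ?_⟩
      exact (h (OrderDual.toDual ⟨t, ht⟩)).2
    · rintro ⟨haξ, hξb⟩ t
      exact ⟨haξ, hξb.trans_lt (OrderDual.ofDual t).2⟩
  rw [← tendsto_comp_coe_Ioi_atBot, ← hI]
  exact tendsto_setIntegral_of_antitone (ι := (Ioi b)ᵒᵈ) (fun _ => measurableSet_Ioo)
    (fun _ _ hst => Ioo_subset_Ioo_right hst) ⟨OrderDual.toDual ⟨c, hbc⟩, hg⟩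

end IntervalLimits

theorem abs_sub_add_eq_max_abs {x y r : ℝ} (hr : 0 ≤ r) :
    |x - y| + r = max |x - r - y| |x + r - y| := by
  rcases le_total 0 (x - y) with h | h
  · rw [abs_of_nonneg h, abs_of_nonneg (by linarith : 0 ≤ x + r - y), max_eq_right]
    · ring
    · rw [abs_le]; constructor <;> linarith
  · rw [abs_of_nonpos h, abs_of_nonpos (by linarith : x - r - y ≤ 0), max_eq_left]
    · ring
    · rw [abs_le]; constructor <;> linarith

theorem hasDerivAt_iff_abs_sub_le {f : ℝ → ℝ} {L x₀ : ℝ} :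
    HasDerivAt f L x₀ ↔ ∀ ε > 0, ∃ δ > 0, ∀ y, |y - x₀| < δ →
      |f y - f x₀ - L * (y - x₀)| ≤ ε * |y - x₀| := by
  simp only [hasDerivAt_iff_isLittleO, Asymptotics.isLittleO_iff, Metric.eventually_nhds_iff,
    Real.dist_eq, Real.norm_eq_abs, smul_eq_mul, mul_comm]

def HasIntervalDerivAt (F : ℝ → ℝ → ℝ) (L x₀ : ℝ) : Prop :=
  ∀ ε > 0, ∃ δ > 0, ∀ a b, a < b → |a - x₀| < δ → |b - x₀| < δ →
    |F a b - L * (b - a)| ≤ ε * max |a - x₀| |b - x₀|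

theorem hasDerivAt_iff_hasIntervalDerivAt {f : ℝ → ℝ} {L x₀ : ℝ} :
    HasDerivAt f L x₀ ↔ HasIntervalDerivAt (fun a b => f b - f a) L x₀ := by
  rw [hasDerivAt_iff_abs_sub_le]
  constructor
  · intro h ε hε
    obtain ⟨δ, hδ, hf⟩ := h (ε / 2) (half_pos hε)
    refine ⟨δ, hδ, fun a b _ ha hb => ?_⟩
    calc |f b - f a - L * (b - a)|
        = |(f b - f x₀ - L * (b - x₀)) - (f a - f x₀ - L * (a - x₀))| := by ring_nf
      _ ≤ ε / 2 * |b - x₀| + ε / 2 * |a - x₀| :=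
        (abs_sub _ _).trans (add_le_add (hf b hb) (hf a ha))
      _ ≤ ε * max |a - x₀| |b - x₀| := by
        nlinarith [le_max_left |a - x₀| |b - x₀|, le_max_right |a - x₀| |b - x₀|]
  · intro h ε hε
    obtain ⟨δ, hδ, hF⟩ := h ε hε
    refine ⟨δ, hδ, fun y hy => ?_⟩
    have h₀ : |x₀ - x₀| < δ := by simpa using hδ
    rcases lt_trichotomy y x₀ with hlt | rfl | hgt
    · have := hF y x₀ hlt hy h₀
      rw [sub_self, abs_zero, max_eq_left (abs_nonneg _)] at this
      rw [← abs_neg]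
      convert this using 2
      ring
    · simp
    · have := hF x₀ y hgt h₀ hy
      rwa [sub_self, abs_zero, max_eq_right (abs_nonneg _)] at this

theorem isSigmaPtR_iff_hasIntervalDerivAt {ν : Measure ℝ} {g : ℝ → ℝ} {x₀ L : ℝ} :
    IsSigmaPtR ν g x₀ L ↔ HasIntervalDerivAt (fun a b => ∫ ξ in Ioo a b, g ξ ∂ν) L x₀ := by
  constructor
  · intro h ε hε
    obtain ⟨δ, hδ, hσ⟩ := h ε hε
    refine ⟨δ, hδ, fun a b hab ha hb => ?_⟩
    have hr : 0 < (b - a) / 2 := by linarith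
    have e₁ : (a + b) / 2 - (b - a) / 2 = a := by ring
    have e₂ : (a + b) / 2 + (b - a) / 2 = b := by ring
    have hmax := abs_sub_add_eq_max_abs (x := (a + b) / 2) (y := x₀) hr.le
    rw [e₁, e₂] at hmax
    have hlt : max |a - x₀| |b - x₀| < δ := max_lt ha hb
    have hball := hσ ((a + b) / 2) ((b - a) / 2) hr
      (by linarith [abs_nonneg ((a + b) / 2 - x₀)]) (by linarith [abs_nonneg ((a + b) / 2 - x₀)])
    rw [Real.ball_eq_Ioo, Real.volume_Ioo, e₁, e₂, ENNReal.toReal_ofReal (by linarith), hmax]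
      at hball
    exact hball.le
  · intro h ε hε
    obtain ⟨δ, hδ, hF⟩ := h (ε / 2) (half_pos hε)
    refine ⟨δ / 2, half_pos hδ, fun x r hr hx hrδ => ?_⟩
    have hmax := abs_sub_add_eq_max_abs (x := x) (y := x₀) hr.le
    have hlt : max |x - r - x₀| |x + r - x₀| < δ := by linarith
    have hIoo := hF (x - r) (x + r) (by linarith) (lt_of_le_of_lt (le_max_left _ _) hlt)
      (lt_of_le_of_lt (le_max_right _ _) hlt)
    rw [← hmax] at hIoo
    rw [Real.ball_eq_Ioo, Real.volume_Ioo, ENNReal.toReal_ofReal (by linarith)]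
    have hpos : 0 < ε * (|x - x₀| + r) := by positivity
    linarith

theorem HasIntervalDerivAt.of_tendsto {F G : ℝ → ℝ → ℝ} {L x₀ : ℝ}
    (hF : HasIntervalDerivAt F L x₀) (l : ℝ → Filter ℝ) [∀ b, (l b).NeBot]
    (hl : ∀ b, l b ≤ 𝓝 b) (hFG : ∀ a b, a < b → Tendsto (F a) (l b) (𝓝 (G a b))) :
    HasIntervalDerivAt G L x₀ := by
  intro ε hε
  obtain ⟨δ, hδ, hFε⟩ := hF ε hε
  refine ⟨δ, hδ, fun a b hab ha hb => ?_⟩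
  have hnear : ∀ᶠ t in l b, a < t ∧ |t - x₀| < δ :=
    hl b <| (lt_mem_nhds hab).and <|
      (continuous_id.sub continuous_const).abs.continuousAt.eventually_lt continuousAt_const hb
  have hbound : Continuous fun t => ε * max |a - x₀| |t - x₀| := by fun_prop
  refine le_of_tendsto_of_tendsto
    (((hFG a b hab).sub ((tendsto_const_nhds.mul (tendsto_id.sub tendsto_const_nhds)).mono_left
      (hl b))).abs) ((hbound.tendsto b).mono_left (hl b)) ?_
  filter_upwards [hnear] with t ⟨hat, ht⟩ using hFε a t hat ha ht

/-- In one dimension, if `μ((a,b]) = f(b) - f(a)`, then f is differentiable at x₀ with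
`f'(x₀) = L` iff x₀ is a σ-point of μ with `D_σ μ(x₀) = L`. -/
theorem stmt12 (ν : Measure ℝ) [IsLocallyFiniteMeasure ν]
    (g : ℝ → ℝ) (hg : Measurable g) (hg1 : ∀ ξ, |g ξ| = 1)
    (f : ℝ → ℝ)
    (hμf : ∀ a b : ℝ, a < b → (∫ ξ in Set.Ioc a b, g ξ ∂ν) = f b - f a)
    (x₀ L : ℝ) :
    HasDerivAt f L x₀ ↔ IsSigmaPtR ν g x₀ L := by
  have hint : ∀ a b, IntegrableOn g (Ioo a b) ν := fun a b =>
    Measure.integrableOn_of_bounded measure_Ioo_lt_top.ne hg.aestronglyMeasurable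
      (M := 1) (ae_of_all _ fun ξ => (hg1 ξ).le)
  rw [hasDerivAt_iff_hasIntervalDerivAt, isSigmaPtR_iff_hasIntervalDerivAt]
  constructor
  · refine fun h => h.of_tendsto (fun b => 𝓝[<] b) (fun _ => nhdsWithin_le_nhds) fun a b hab => ?_
    refine (tendsto_setIntegral_Ioc_nhdsLT (hint a b)).congr' ?_
    filter_upwards [Ioo_mem_nhdsLT hab] with t ht using hμf a t ht.1
  · refine fun h => h.of_tendsto (fun b => 𝓝[>] b) (fun _ => nhdsWithin_le_nhds) fun a b hab => ?_
    rw [← hμf a b hab]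
    exact tendsto_setIntegral_Ioo_nhdsGT (lt_add_one b) (hint a (b + 1))

end
end

section
/- Let μ be a locally finite complex (or signed) Borel measure on ℝ and x₀ ∈ ℝ. Then x₀ is a σ-point of μ if and only if μ has a strong derivative at x₀, and in that case D_σμ(x₀) = Dμ(x₀). -/
open MeasureTheory Metric Filter
open scoped ENNReal Topology NNReal

noncomputable section

/-- σ-point of the locally finite complex measure dμ = f dν on ℝ, with D_σ μ(x₀) = L. -/
def IsSigmaPtC (ν : Measure ℝ) (f : ℝ → ℂ) (x₀ : ℝ) (L : ℂ) : Prop :=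
  ∀ ε > 0, ∃ δ > 0, ∀ (x r : ℝ), 0 < r → |x - x₀| < δ → r < δ →
    ‖(∫ ξ in ball x r, f ξ ∂ν) - L * ((volume (ball x r)).toReal : ℂ)‖ < ε * (|x - x₀| + r)

/-- The measure dμ = f dν on ℝ has strong derivative L at x₀. -/
def HasStrongDerivC (ν : Measure ℝ) (f : ℝ → ℂ) (x₀ : ℝ) (L : ℂ) : Prop :=
  ∀ (y s : ℝ), 0 < s →
    Tendsto (fun r : ℝ =>
        (∫ ξ in ball (x₀ + r * y) (r * s), f ξ ∂ν) /
          ((volume (ball (x₀ + r * y) (r * s))).toReal : ℂ))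
      (𝓝[>] 0) (𝓝 L)

/-!
Both conditions say that `μ I = L |I| + o(ρ)` for open intervals `I ⊆ [x₀ - ρ, x₀ + ρ]`; the strong
derivative asserts this only along each fixed shape `x₀ + r B`, so the point is uniformity in the
shape. It comes from additivity: with the oriented distribution function
`F x = ∫ ξ in x₀..x, f ξ ∂ν`, the ball `(x - r, x + r)` has mass
`F (x + r) - F (x - r) - μ {x + r}`, and finitely many shapes, namely `(0, 1)`, `(-1, 0)` and
`(w - 1, w + 1)`, `(w - 1, w)`, `(w, w + 1)` for `w ∈ {0, ±1}`, already give
`F (x₀ + t) = L t + o(t)` and `μ {x₀ + t} = o(t)`. The converse is a rescaling.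
-/

open Asymptotics Set

theorem norm_div_ofReal_sub (J L : ℂ) {v : ℝ} (hv : 0 < v) :
    ‖J / (v : ℂ) - L‖ = ‖J - L * (v : ℂ)‖ / v := by
  have hv' : (v : ℂ) ≠ 0 := by exact_mod_cast hv.ne'
  rw [show J / v - L = (J - L * v) / v by field_simp, norm_div, Complex.norm_real,
    Real.norm_of_nonneg hv.le]

theorem MeasureTheory.LocallyIntegrable.integrableOn_of_subset_Icc {E : Type*}
    [NormedAddCommGroup E] {μ : Measure ℝ} {f : ℝ → E} (hf : LocallyIntegrable f μ)
    {s : Set ℝ} {a b : ℝ} (hs : s ⊆ Icc a b) : IntegrableOn f s μ :=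
  (hf.integrableOn_isCompact isCompact_Icc).mono_set hs

section IntervalAdditivity

variable {E : Type*} [NormedAddCommGroup E] [NormedSpace ℝ E] {μ : Measure ℝ} {f : ℝ → E}

theorem setIntegral_Ioc_eq_Ioo_add_singleton (hf : LocallyIntegrable f μ) {a b : ℝ} (hab : a < b) :
    ∫ ξ in Ioc a b, f ξ ∂μ = (∫ ξ in Ioo a b, f ξ ∂μ) + ∫ ξ in {b}, f ξ ∂μ := by
  rw [← Ioo_insert_right hab, insert_eq, union_comm,
    setIntegral_union (by simp) (measurableSet_singleton b)
      (hf.integrableOn_of_subset_Icc Ioo_subset_Icc_self)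
      (hf.integrableOn_of_subset_Icc (singleton_subset_iff.2 (right_mem_Icc.2 hab.le)))]

theorem setIntegral_Ioo_eq_Ioo_add_singleton_add_Ioo (hf : LocallyIntegrable f μ) {a b c : ℝ}
    (hab : a < b) (hbc : b < c) :
    ∫ ξ in Ioo a c, f ξ ∂μ =
      (∫ ξ in Ioo a b, f ξ ∂μ) + (∫ ξ in {b}, f ξ ∂μ) + ∫ ξ in Ioo b c, f ξ ∂μ := by
  rw [← Ioc_union_Ioo_eq_Ioo hab.le hbc,
    setIntegral_union (disjoint_left.2 fun _ hx hx' => hx'.1.not_ge hx.2) measurableSet_Ioo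
      (hf.integrableOn_of_subset_Icc Ioc_subset_Icc_self)
      (hf.integrableOn_of_subset_Icc Ioo_subset_Icc_self),
    setIntegral_Ioc_eq_Ioo_add_singleton hf hab]

theorem setIntegral_ball_eq_intervalIntegral_sub (hf : LocallyIntegrable f μ) (x₀ x : ℝ) {r : ℝ}
    (hr : 0 < r) :
    ∫ ξ in ball x r, f ξ ∂μ =
      (∫ ξ in x₀..x + r, f ξ ∂μ) - (∫ ξ in x₀..x - r, f ξ ∂μ) - ∫ ξ in {x + r}, f ξ ∂μ := by
  have hint (a b : ℝ) : IntervalIntegrable f μ a b :=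
    intervalIntegrable_iff.2 (hf.integrableOn_of_subset_Icc uIoc_subset_uIcc)
  rw [intervalIntegral.integral_interval_sub_left (hint _ _) (hint _ _),
    intervalIntegral.integral_of_le (by linarith),
    setIntegral_Ioc_eq_Ioo_add_singleton hf (by linarith), Real.ball_eq_Ioo, add_sub_cancel_right]

end IntervalAdditivity

theorem isLittleO_nhds_zero_of_nhdsGT {E : Type*} [NormedAddCommGroup E] {g : ℝ → E}
    (hpos : g =o[𝓝[>] 0] id) (hneg : (fun t => g (-t)) =o[𝓝[>] 0] id) (hzero : g 0 = 0) :
    g =o[𝓝 0] id := by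
  have hlt : (fun t => g t) =o[𝓝[<] 0] fun t => t := by
    have := hneg.comp_tendsto (neg_zero (G := ℝ) ▸ tendsto_neg_nhdsLT)
    simpa [Function.comp_def] using isLittleO_neg_right.1 this
  rw [← nhdsNE_sup_pure, ← nhdsLT_sup_nhdsGT]
  exact (hlt.sup hpos).sup (isLittleO_pure.2 hzero)

variable {ν : Measure ℝ} {f : ℝ → ℂ} {x₀ : ℝ} {L : ℂ}

theorem IsSigmaPtC.hasStrongDerivC (h : IsSigmaPtC ν f x₀ L) : HasStrongDerivC ν f x₀ L := by
  intro y s hs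
  rw [Metric.tendsto_nhdsWithin_nhds]
  intro ε hε
  obtain ⟨δ, hδ, H⟩ := h (ε * s / (|y| + s)) (by positivity)
  refine ⟨δ / (|y| + s), by positivity, fun r (hr : 0 < r) hrδ => ?_⟩
  rw [Real.dist_eq, sub_zero, abs_of_pos hr, lt_div_iff₀ (by positivity)] at hrδ
  have hdist : |x₀ + r * y - x₀| = r * |y| := by
    rw [add_sub_cancel_left, abs_mul, abs_of_pos hr]
  have hσ := H (x₀ + r * y) (r * s) (by positivity) (by nlinarith) (by nlinarith [abs_nonneg y])
  have hvol : (volume (ball (x₀ + r * y) (r * s))).toReal = 2 * (r * s) :=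
    Real.volume_real_ball (by positivity)
  rw [hdist, hvol] at hσ
  rw [hvol, dist_eq_norm, norm_div_ofReal_sub _ _ (by positivity), div_lt_iff₀ (by positivity)]
  calc _ < ε * s / (|y| + s) * (r * |y| + r * s) := hσ
    _ = ε * (r * s) := by field_simp
    _ < ε * (2 * (r * s)) := by nlinarith [mul_pos hr hs]

namespace HasStrongDerivC

theorem isLittleO_setIntegral_Ioo (h : HasStrongDerivC ν f x₀ L) {a b : ℝ} (hab : a < b) :
    (fun r : ℝ => (∫ ξ in Ioo (x₀ + r * a) (x₀ + r * b), f ξ ∂ν) - L * (r * (b - a) : ℝ))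
      =o[𝓝[>] 0] id := by
  refine IsLittleO.of_bound fun c hc => ?_
  have hlim := h ((a + b) / 2) ((b - a) / 2) (by linarith)
  filter_upwards [self_mem_nhdsWithin,
    hlim.eventually (Metric.ball_mem_nhds L (div_pos hc (sub_pos.2 hab)))] with r (hr : 0 < r) hr'
  have hball :
      ball (x₀ + r * ((a + b) / 2)) (r * ((b - a) / 2)) = Ioo (x₀ + r * a) (x₀ + r * b) := by
    rw [Real.ball_eq_Ioo]; congr 1 <;> ring
  have hvol : (volume (Ioo (x₀ + r * a) (x₀ + r * b))).toReal = r * (b - a) := by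
    rw [← hball]; exact (Real.volume_real_ball (by nlinarith)).trans (by ring)
  rw [dist_eq_norm, hball, hvol, norm_div_ofReal_sub _ _ (by nlinarith),
    div_lt_div_iff₀ (by nlinarith) (by linarith)] at hr'
  rw [id, Real.norm_of_nonneg hr.le]
  nlinarith

variable (hf : LocallyIntegrable f ν) (h : HasStrongDerivC ν f x₀ L)
include hf h

theorem isLittleO_setIntegral_singleton (w : ℝ) :
    (fun r : ℝ => ∫ ξ in {x₀ + r * w}, f ξ ∂ν) =o[𝓝[>] 0] id := by
  have hX := h.isLittleO_setIntegral_Ioo (show w - 1 < w + 1 by linarith)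
  have hY := h.isLittleO_setIntegral_Ioo (show w - 1 < w by linarith)
  have hZ := h.isLittleO_setIntegral_Ioo (show w < w + 1 by linarith)
  refine ((hX.sub hY).sub hZ).congr' ?_ EventuallyEq.rfl
  filter_upwards [self_mem_nhdsWithin] with r (hr : 0 < r)
  rw [setIntegral_Ioo_eq_Ioo_add_singleton_add_Ioo hf (b := x₀ + r * w) (by nlinarith)
    (by nlinarith)]
  push_cast
  ring

theorem setIntegral_singleton_eq_zero : ∫ ξ in {x₀}, f ξ ∂ν = 0 := by
  have h0 := h.isLittleO_setIntegral_singleton hf 0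
  simp only [mul_zero, add_zero] at h0
  refine (isLittleO_const_left.1 h0).resolve_right fun htop => ?_
  refine not_tendsto_atTop_of_tendsto_nhds (a := 0) ?_ htop
  exact tendsto_norm_zero.mono_left nhdsWithin_le_nhds

theorem isLittleO_setIntegral_singleton_nhds :
    (fun t : ℝ => ∫ ξ in {x₀ + t}, f ξ ∂ν) =o[𝓝 0] id := by
  refine isLittleO_nhds_zero_of_nhdsGT ?_ ?_ (by simpa using h.setIntegral_singleton_eq_zero hf)
  · simpa using h.isLittleO_setIntegral_singleton hf 1
  · simpa [← sub_eq_add_neg] using h.isLittleO_setIntegral_singleton hf (-1)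

theorem isLittleO_intervalIntegral :
    (fun t : ℝ => (∫ ξ in x₀..x₀ + t, f ξ ∂ν) - L * t) =o[𝓝 0] id := by
  refine isLittleO_nhds_zero_of_nhdsGT ?_ ?_ (by simp)
  · refine ((h.isLittleO_setIntegral_Ioo zero_lt_one).add
      (h.isLittleO_setIntegral_singleton hf 1)).congr' ?_ EventuallyEq.rfl
    filter_upwards [self_mem_nhdsWithin] with t (ht : 0 < t)
    rw [intervalIntegral.integral_of_le (by linarith),
      setIntegral_Ioc_eq_Ioo_add_singleton hf (by linarith)]
    simp only [mul_zero, add_zero, mul_one, sub_zero]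
    ring
  · refine (h.isLittleO_setIntegral_Ioo neg_one_lt_zero).neg_left.congr' ?_ EventuallyEq.rfl
    filter_upwards [self_mem_nhdsWithin] with t (ht : 0 < t)
    rw [intervalIntegral.integral_of_ge (by linarith),
      setIntegral_Ioc_eq_Ioo_add_singleton hf (by linarith), h.setIntegral_singleton_eq_zero hf]
    simp only [mul_zero, add_zero, mul_neg_one, ← sub_eq_add_neg, zero_sub]
    push_cast
    ring

theorem isSigmaPtC : IsSigmaPtC ν f x₀ L := by
  intro ε hε
  have hloc := ((h.isLittleO_intervalIntegral hf).def (by positivity : 0 < ε / 4)).and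
    ((h.isLittleO_setIntegral_singleton_nhds hf).def (by positivity : 0 < ε / 4))
  obtain ⟨δ, hδ, H⟩ := Metric.eventually_nhds_iff.1 hloc
  refine ⟨δ / 2, by positivity, fun x r hr hx hrδ => ?_⟩
  have hclose (t : ℝ) (ht : |t| ≤ |x - x₀| + r) : dist t 0 < δ := by
    rw [Real.dist_eq, sub_zero]; linarith
  have hright_le : |x + r - x₀| ≤ |x - x₀| + r := by
    simpa [abs_of_pos hr, add_sub_right_comm] using abs_add_le (x - x₀) r
  have hleft_le : |x - r - x₀| ≤ |x - x₀| + r := by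
    simpa [abs_of_pos hr, sub_right_comm] using abs_sub (x - x₀) r
  obtain ⟨hright, hatom⟩ := H (hclose _ hright_le)
  obtain ⟨hleft, -⟩ := H (hclose _ hleft_le)
  simp only [add_sub_cancel, id, Real.norm_eq_abs] at hright hatom hleft
  have hsplit : (∫ ξ in ball x r, f ξ ∂ν) - L * ((volume (ball x r)).toReal : ℂ) =
      ((∫ ξ in x₀..x + r, f ξ ∂ν) - L * ((x + r - x₀ : ℝ) : ℂ))
        - ((∫ ξ in x₀..x - r, f ξ ∂ν) - L * ((x - r - x₀ : ℝ) : ℂ))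
        - ∫ ξ in {x + r}, f ξ ∂ν := by
    rw [setIntegral_ball_eq_intervalIntegral_sub hf x₀ x hr, ← measureReal_def,
      Real.volume_real_ball hr.le]
    push_cast
    ring
  rw [hsplit]
  calc _ ≤ ε / 4 * |x + r - x₀| + ε / 4 * |x - r - x₀| + ε / 4 * |x + r - x₀| :=
        norm_sub_le_of_le (norm_sub_le_of_le hright hleft) hatom
    _ ≤ 3 * (ε / 4) * (|x - x₀| + r) := by nlinarith
    _ < ε * (|x - x₀| + r) := by nlinarith [abs_nonneg (x - x₀)]

end HasStrongDerivC

/-- In one dimension, x₀ is a σ-point of μ iff μ has a strong derivative at x₀, and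
the two values agree. -/
theorem stmt14 (ν : Measure ℝ) [IsLocallyFiniteMeasure ν]
    (f : ℝ → ℂ) (hf : Measurable f) (hf1 : ∀ ξ, ‖f ξ‖ = 1)
    (x₀ : ℝ) (L : ℂ) :
    IsSigmaPtC ν f x₀ L ↔ HasStrongDerivC ν f x₀ L := by
  have hloc : LocallyIntegrable f ν :=
    (locallyIntegrable_const (1 : ℂ)).mono hf.aestronglyMeasurable (by simp [hf1])
  exact ⟨IsSigmaPtC.hasStrongDerivC, fun h => h.isSigmaPtC hloc⟩
end
end
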